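/- The monic Freud polynomials P_n for the weight e^{-x^4} satisfy the structure relation P_n'(x) = n P_{n-1}(x) + d_n P_{n-3}(x) for n ≥ 3, where d_n = 4 k_n / k_{n-3} and k_n = ∫_ℝ P_n(x)^2 e^{-x^4} dx. -/

import Mathlib

open Polynomial MeasureTheory Filter Topology

/-- The Freud inner product `⟨f,g⟩_F = ∫_ℝ f(x) g(x) e^{-x⁴} dx`. -/
noncomputable def innerF (f g : Polynomial ℝ) : ℝ :=
  ∫ x : ℝ, f.eval x * g.eval x * Real.exp (-x ^ 4)

/-!
The functional `L p = ∫ p(x) e^{-x⁴} dx` is positive definite, even, and integration by parts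
gives `L (p') = 4 L (x³ p)`. Put `D = P_n' - n P_{n-1} - d_n P_{n-3}`: the leading terms cancel,
so `deg D < n - 1`, and `L (D xᵐ) = 4 L (P_n x^{m+3}) - n L (P_{n-1} xᵐ) - d_n L (P_{n-3} xᵐ)`.
For `m < n - 3` every term vanishes by orthogonality, for `m = n - 3` what is left is
`4 k_n - d_n k_{n-3} = 0`, and for `m = n - 2` the two remaining terms vanish because `P_j`
has the parity of `j` (as `L` is even, `(-1)ʲ P_j(-x)` is again monic orthogonal, hence equal
to `P_j`). Being orthogonal to every polynomial of lower degree, `D` is zero.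
-/

namespace Polynomial

section OrthogonalFunctional

variable (L : ℝ[X] →ₗ[ℝ] ℝ) {P Q R : ℝ[X]} {n : ℕ}

theorem map_mul_eq_zero_of_degree_lt (hP : ∀ m < n, L (P * X ^ m) = 0) {q : ℝ[X]}
    (hq : q.degree < n) : L (P * q) = 0 := by
  rw [q.as_sum_support_C_mul_X_pow, Finset.mul_sum, map_sum]
  refine Finset.sum_eq_zero fun m hm => ?_
  rw [mul_left_comm, ← smul_eq_C_mul, map_smul, hP m ?_, smul_zero]
  exact_mod_cast (le_degree_of_mem_supp m hm).trans_lt hq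

theorem eq_zero_of_degree_lt_of_orthogonal (hL : ∀ p ≠ 0, 0 < L (p * p))
    (hR : ∀ m < n, L (R * X ^ m) = 0) (hdeg : R.degree < n) : R = 0 := by
  by_contra h
  exact (hL R h).ne' (map_mul_eq_zero_of_degree_lt L hR hdeg)

theorem eq_of_orthogonal_of_leadingCoeff_eq (hL : ∀ p ≠ 0, 0 < L (p * p))
    (hP : ∀ m < n, L (P * X ^ m) = 0) (hQ : ∀ m < n, L (Q * X ^ m) = 0)
    (hPdeg : P.degree = n) (hQdeg : Q.degree = n) (hlc : P.leadingCoeff = Q.leadingCoeff) :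
    P = Q := by
  have hP0 : P ≠ 0 := by rintro rfl; simp at hPdeg
  refine sub_eq_zero.1 (eq_zero_of_degree_lt_of_orthogonal L hL (n := n) (fun m hm => ?_) ?_)
  · rw [sub_mul, map_sub, hP m hm, hQ m hm, sub_zero]
  · exact hPdeg ▸ degree_sub_lt_left (hPdeg.trans hQdeg.symm) hP0 hlc

theorem map_mul_X_pow_natDegree (hmonic : P.Monic) (hP : ∀ m < P.natDegree, L (P * X ^ m) = 0) :
    L (P * X ^ P.natDegree) = L (P * P) := by
  have hlt : (X ^ P.natDegree - P).degree < (P.natDegree : WithBot ℕ) := by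
    simpa using degree_sub_lt_left (p := X ^ P.natDegree) (q := P)
      (by rw [degree_X_pow, degree_eq_natDegree hmonic.ne_zero]) (pow_ne_zero _ X_ne_zero)
      (by rw [leadingCoeff_X_pow, hmonic.leadingCoeff])
  rw [← sub_eq_zero, ← map_sub, ← mul_sub, map_mul_eq_zero_of_degree_lt L hP hlt]

theorem map_eq_zero_of_comp_neg_X_eq_neg (hsymm : ∀ p, L (p.comp (-X)) = L p) {p : ℝ[X]}
    (hp : p.comp (-X) = -p) : L p = 0 := by
  have h := hsymm p
  rw [hp, map_neg] at h
  linarith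

theorem comp_neg_X_eq_of_orthogonal (hL : ∀ p ≠ 0, 0 < L (p * p))
    (hsymm : ∀ p, L (p.comp (-X)) = L p) (hmonic : P.Monic)
    (hP : ∀ m < P.natDegree, L (P * X ^ m) = 0) :
    P.comp (-X) = C ((-1) ^ P.natDegree) * P := by
  have hlc : (P.comp (-X)).leadingCoeff = (-1) ^ P.natDegree := by
    rw [leadingCoeff_comp (by simp), hmonic.leadingCoeff]; simp
  have hne : (-1 : ℝ) ^ P.natDegree ≠ 0 := by simp
  have hcomp : P.comp (-X) ≠ 0 := fun h => hne (by rw [← hlc, h, leadingCoeff_zero])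
  refine eq_of_orthogonal_of_leadingCoeff_eq L hL (n := P.natDegree) (fun m hm => ?_)
    (fun m hm => ?_) ?_ ?_ ?_
  · have h : P.comp (-X) * X ^ m = (P * (-X) ^ m).comp (-X) := by
      simp only [mul_comp, pow_comp, neg_comp, X_comp, neg_neg]
    rw [h, hsymm]
    exact map_mul_eq_zero_of_degree_lt L hP (by simpa using hm)
  · rw [mul_assoc, ← smul_eq_C_mul, map_smul, hP m hm, smul_zero]
  · rw [degree_eq_natDegree hcomp, natDegree_comp]
    simp
  · rw [degree_C_mul hne, degree_eq_natDegree hmonic.ne_zero]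
  · rw [hlc, leadingCoeff_mul, leadingCoeff_C, hmonic.leadingCoeff, mul_one]

theorem map_mul_X_pow_eq_zero_of_odd (hL : ∀ p ≠ 0, 0 < L (p * p))
    (hsymm : ∀ p, L (p.comp (-X)) = L p) (hmonic : P.Monic)
    (hP : ∀ m < P.natDegree, L (P * X ^ m) = 0) {j : ℕ} (hodd : Odd (P.natDegree + j)) :
    L (P * X ^ j) = 0 := by
  refine map_eq_zero_of_comp_neg_X_eq_neg L hsymm ?_
  rw [mul_comp, comp_neg_X_eq_of_orthogonal L hL hsymm hmonic hP, X_pow_comp,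
    neg_pow (X : ℝ[X]), map_pow, C_neg, C_1]
  calc (-1) ^ P.natDegree * P * ((-1) ^ j * X ^ j)
      = (-1) ^ (P.natDegree + j) * (P * X ^ j) := by ring
    _ = -(P * X ^ j) := by rw [hodd.neg_one_pow, neg_one_mul]

theorem map_derivative_mul_X_pow (hder : ∀ p, L (derivative p) = 4 * L (X ^ 3 * p))
    (hP : ∀ m < n, L (P * X ^ m) = 0) {m : ℕ} (hm : m ≤ n) :
    L (derivative P * X ^ m) = 4 * L (P * X ^ (m + 3)) := by
  have hlt : (derivative (X ^ m : ℝ[X])).degree < n :=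
    (degree_derivative_lt (pow_ne_zero _ X_ne_zero)).trans_le (by simpa using hm)
  have h := hder (P * X ^ m)
  rw [derivative_mul, map_add, map_mul_eq_zero_of_degree_lt L hP hlt, add_zero] at h
  rw [h, show X ^ 3 * (P * X ^ m) = P * X ^ (m + 3) by ring]

end OrthogonalFunctional

theorem degree_derivative_sub_lt {P Q R : ℝ[X]} {n : ℕ} (hP : P.Monic)
    (hPdeg : P.natDegree = n + 3) (hQ : Q.Monic) (hQdeg : Q.natDegree = n + 2)
    (hRdeg : R.natDegree ≤ n) (d : ℝ) :
    (derivative P - C ((n + 3 : ℕ) : ℝ) * Q - C d * R).degree < (n + 2 : ℕ) := by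
  rw [degree_lt_iff_coeff_zero]
  intro m hm
  have hR : R.coeff m = 0 := coeff_eq_zero_of_natDegree_lt (by omega)
  rw [coeff_sub, coeff_sub, coeff_C_mul, coeff_C_mul, coeff_derivative, hR, mul_zero, sub_zero]
  rcases hm.eq_or_lt with rfl | hlt
  · rw [show n + 2 + 1 = P.natDegree by omega, hP.coeff_natDegree, ← hQdeg, hQ.coeff_natDegree,
      hQdeg, hPdeg]
    push_cast; ring
  · rw [coeff_eq_zero_of_natDegree_lt (p := P) (by omega),
      coeff_eq_zero_of_natDegree_lt (p := Q) (by omega)]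
    ring

theorem derivative_eq_structure_relation (L : ℝ[X] →ₗ[ℝ] ℝ) (hL : ∀ p ≠ 0, 0 < L (p * p))
    (hsymm : ∀ p, L (p.comp (-X)) = L p) (hder : ∀ p, L (derivative p) = 4 * L (X ^ 3 * p))
    (P : ℕ → ℝ[X]) (hmonic : ∀ n, (P n).Monic) (hdeg : ∀ n, (P n).natDegree = n)
    (horth : ∀ n, ∀ m < n, L (P n * X ^ m) = 0) (n : ℕ) :
    derivative (P (n + 3)) = C ((n + 3 : ℕ) : ℝ) * P (n + 2)
      + C (4 * L (P (n + 3) * P (n + 3)) / L (P n * P n)) * P n := by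
  set d := 4 * L (P (n + 3) * P (n + 3)) / L (P n * P n)
  have horth_natDegree : ∀ i, ∀ m < (P i).natDegree, L (P i * X ^ m) = 0 := fun i => by
    rw [hdeg]
    exact horth i
  have hnorm : ∀ i, L (P i * X ^ i) = L (P i * P i) := fun i => by
    simpa only [hdeg] using map_mul_X_pow_natDegree L (hmonic i) (horth_natDegree i)
  have hodd : ∀ i j, Odd (i + j) → L (P i * X ^ j) = 0 := fun i j h =>
    map_mul_X_pow_eq_zero_of_odd L hL hsymm (hmonic i) (horth_natDegree i) (by rwa [hdeg])
  have hd : d * L (P n * P n) = 4 * L (P (n + 3) * P (n + 3)) :=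
    div_mul_cancel₀ _ (hL _ (hmonic n).ne_zero).ne'
  rw [← sub_eq_zero, ← sub_sub]
  refine eq_zero_of_degree_lt_of_orthogonal L hL (fun m hm => ?_)
    (degree_derivative_sub_lt (hmonic _) (hdeg _) (hmonic _) (hdeg _) (hdeg _).le d)
  rw [sub_mul, sub_mul, map_sub, map_sub, mul_assoc, mul_assoc, ← smul_eq_C_mul,
    ← smul_eq_C_mul, map_smul, map_smul, smul_eq_mul, smul_eq_mul,
    map_derivative_mul_X_pow L hder (horth _) (by omega), horth (n + 2) m (by omega)]
  obtain hm | rfl | rfl : m < n ∨ m = n ∨ m = n + 1 := by omega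
  · rw [horth _ _ (by omega), horth n m hm]; ring
  · rw [hnorm, hnorm, hd]; ring
  · rw [hodd _ _ ⟨n + 3, by ring⟩, hodd _ _ ⟨n, by ring⟩]; ring

theorem integrable_eval_mul_exp_neg_mul_sq (p : ℝ[X]) {b : ℝ} (hb : 0 < b) :
    Integrable fun x : ℝ => p.eval x * Real.exp (-b * x ^ 2) := by
  induction p using Polynomial.induction_on' with
  | add p q hp hq =>
    simp only [eval_add, add_mul]
    exact hp.add hq
  | monomial n a =>
    have hn : (-1 : ℝ) < n := by linarith [n.cast_nonneg (α := ℝ)]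
    have h := (integrable_rpow_mul_exp_neg_mul_sq hb hn).const_mul a
    simpa only [eval_monomial, Real.rpow_natCast, mul_assoc] using h

theorem integrable_eval_mul_exp_neg_pow_four (p : ℝ[X]) :
    Integrable fun x : ℝ => p.eval x * Real.exp (-x ^ 4) := by
  refine ((integrable_eval_mul_exp_neg_mul_sq p one_pos).norm.const_mul (Real.exp 1)).mono'
    (by fun_prop) (ae_of_all _ fun x => ?_)
  have hx : -x ^ 4 ≤ 1 + -1 * x ^ 2 := by nlinarith [sq_nonneg (x ^ 2 - 1)]
  rw [norm_mul, norm_mul, Real.norm_of_nonneg (Real.exp_pos _).le,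
    Real.norm_of_nonneg (Real.exp_pos _).le, mul_left_comm, ← Real.exp_add]
  gcongr

end Polynomial

noncomputable def freudFunctional : ℝ[X] →ₗ[ℝ] ℝ where
  toFun p := ∫ x, p.eval x * Real.exp (-x ^ 4)
  map_add' p q := by
    simp only [eval_add, add_mul]
    exact integral_add (integrable_eval_mul_exp_neg_pow_four p)
      (integrable_eval_mul_exp_neg_pow_four q)
  map_smul' a p := by
    simp only [eval_smul, smul_eq_mul, mul_assoc, RingHom.id_apply]
    exact integral_const_mul a _

theorem freudFunctional_apply (p : ℝ[X]) :
    freudFunctional p = ∫ x, p.eval x * Real.exp (-x ^ 4) := rfl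

theorem innerF_eq_freudFunctional (f g : ℝ[X]) : innerF f g = freudFunctional (f * g) := by
  simp only [innerF, freudFunctional_apply, eval_mul]

theorem freudFunctional_derivative (p : ℝ[X]) :
    freudFunctional (derivative p) = 4 * freudFunctional (X ^ 3 * p) := by
  have hderiv : ∀ x : ℝ, HasDerivAt (fun y => p.eval y * Real.exp (-y ^ 4))
      ((derivative p - C 4 * (X ^ 3 * p)).eval x * Real.exp (-x ^ 4)) x := fun x => by
    refine ((p.hasDerivAt x).fun_mul (hasDerivAt_pow 4 x).fun_neg.exp).congr_deriv ?_
    simp only [eval_sub, eval_mul, eval_C, eval_pow, eval_X]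
    push_cast; ring
  have h := integral_eq_zero_of_hasDerivAt_of_integrable hderiv
    (integrable_eval_mul_exp_neg_pow_four _) (integrable_eval_mul_exp_neg_pow_four p)
  rw [← freudFunctional_apply, map_sub, ← smul_eq_C_mul, map_smul, smul_eq_mul] at h
  linarith

theorem freudFunctional_comp_neg_X (p : ℝ[X]) :
    freudFunctional (p.comp (-X)) = freudFunctional p := by
  simp only [freudFunctional_apply, eval_comp, eval_neg, eval_X]
  rw [← integral_neg_eq_self]
  simp only [neg_neg, Even.neg_pow (by decide : Even 4)]

theorem freudFunctional_mul_self_pos {p : ℝ[X]} (hp : p ≠ 0) : 0 < freudFunctional (p * p) := by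
  have hnonneg : 0 ≤ fun x : ℝ => (p * p).eval x * Real.exp (-x ^ 4) := fun x =>
    mul_nonneg (by simpa only [eval_mul] using mul_self_nonneg (p.eval x)) (Real.exp_pos _).le
  rw [freudFunctional_apply, integral_pos_iff_support_of_nonneg hnonneg
    (integrable_eval_mul_exp_neg_pow_four _)]
  refine (Continuous.isOpen_support (by fun_prop)).measure_pos volume ?_
  obtain ⟨x, hx⟩ := (p.finite_setOfPred_isRoot hp).infinite_compl.nonempty
  exact ⟨x, by simpa [Function.mem_support, IsRoot] using hx⟩

/-- The monic Freud polynomials satisfy the structure relation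
`P_n' = n P_{n-1} + d_n P_{n-3}` for `n ≥ 3`, where `d n = 4 k n / k (n-3)`. -/
theorem freud_structure_relation
    (P : ℕ → Polynomial ℝ) (k d : ℕ → ℝ)
    (hmonic : ∀ n, (P n).Monic) (hdeg : ∀ n, (P n).natDegree = n)
    (horth : ∀ n m : ℕ, m < n → innerF (P n) (X ^ m) = 0)
    (hk : ∀ n, k n = innerF (P n) (P n))
    (hd : ∀ n, d n = 4 * k n / k (n - 3)) :
    ∀ n, 3 ≤ n →
      Polynomial.derivative (P n) = C (n : ℝ) * P (n - 1) + C (d n) * P (n - 3) := by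
  intro n hn
  obtain ⟨n, rfl⟩ := Nat.exists_eq_add_of_le' hn
  have horth' : ∀ n, ∀ m < n, freudFunctional (P n * X ^ m) = 0 := fun n m hm => by
    rw [← innerF_eq_freudFunctional]
    exact horth n m hm
  rw [hd, hk, hk, Nat.add_sub_cancel, show n + 3 - 1 = n + 2 by omega,
    innerF_eq_freudFunctional, innerF_eq_freudFunctional]
  exact derivative_eq_structure_relation freudFunctional (fun _ => freudFunctional_mul_self_pos)
    freudFunctional_comp_neg_X freudFunctional_derivative P hmonic hdeg horth' n
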